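/- Consider a block operator on the orthogonal decomposition H = X ⊕ X^⊥ of a Hilbert space, given by 𝕃 = [[M, B],[Bᵀ, L^⊥]] with M symmetric on the finite-dimensional space X, and suppose Λ is an eigenvalue of 𝕃 with Λ < (C/2)ε^r, where L^⊥ is self-adjoint with spectrum in [Cε^r, ∞), and ‖B‖, ‖Bᵀ‖ ≤ cε. If the eigenvector has nonzero component v₁ in X, then dist(σ(M), Λ) ≤ c²ε²/(Cε^r − Λ) ≤ (2c²/C) ε^{2−r}. -/

import Mathlib

open scoped RealInnerProductSpace

section Aux

variable {Y : Type*} [NormedAddCommGroup Y] [InnerProductSpace ℝ Y] [CompleteSpace Y]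

/-- Cauchy–Schwarz for a positive selfadjoint operator: `‖P y‖² ≤ ‖P‖ ⟪P y, y⟫`. -/
lemma aux_cs (P : Y →L[ℝ] Y) (hP : IsSelfAdjoint P)
    (hpos : ∀ y, 0 ≤ ⟪P y, y⟫) (y : Y) :
    ‖P y‖ ^ 2 ≤ ‖P‖ * ⟪P y, y⟫ := by
  by_cases h0 : ‖P y‖ = 0
  · rw [h0]
    nlinarith [hpos y, norm_nonneg P]
  · have hPy : 0 < ‖P y‖ := lt_of_le_of_ne (norm_nonneg _) (Ne.symm h0)
    have hPn : 0 < ‖P‖ := by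
      by_contra h
      push_neg at h
      have := P.le_opNorm y
      nlinarith [norm_nonneg y]
    have hsym := ContinuousLinearMap.isSelfAdjoint_iff_isSymmetric.mp hP
    set t : ℝ := ‖P‖⁻¹ with htdef
    have ht : t * ‖P‖ = 1 := inv_mul_cancel₀ hPn.ne'
    have hsym1 : ⟪P (P y), y⟫ = ⟪P y, P y⟫ := hsym (P y) y
    have hb : ⟪P (P y), P y⟫ ≤ ‖P‖ * ‖P y‖ ^ 2 := by
      calc ⟪P (P y), P y⟫ ≤ ‖P (P y)‖ * ‖P y‖ := real_inner_le_norm _ _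
        _ ≤ (‖P‖ * ‖P y‖) * ‖P y‖ := by
            have := P.le_opNorm (P y)
            nlinarith [norm_nonneg (P y)]
        _ = ‖P‖ * ‖P y‖ ^ 2 := by ring
    have hexp : 0 ≤ ⟪P y, y⟫ - 2 * t * ‖P y‖ ^ 2 + t ^ 2 * ⟪P (P y), P y⟫ := by
      have h := hpos (y - t • P y)
      simp only [map_sub, map_smul, inner_sub_left, inner_sub_right,
        real_inner_smul_left, real_inner_smul_right, hsym1,
        real_inner_self_eq_norm_sq] at h
      nlinarith [h]
    have h2 : t ^ 2 * ⟪P (P y), P y⟫ ≤ t ^ 2 * (‖P‖ * ‖P y‖ ^ 2) :=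
      mul_le_mul_of_nonneg_left hb (sq_nonneg t)
    have htt : t ^ 2 * (‖P‖ * ‖P y‖ ^ 2) = t * ‖P y‖ ^ 2 := by
      rw [htdef]; field_simp
    have h3 : t * ‖P y‖ ^ 2 ≤ ⟪P y, y⟫ := by linarith [hexp, h2, htt]
    have h4 : ‖P‖ * (t * ‖P y‖ ^ 2) = ‖P y‖ ^ 2 := by
      rw [htdef]; field_simp
    linarith [mul_le_mul_of_nonneg_left h3 hPn.le, h4.le, h4.ge]

/-- A selfadjoint operator with nonnegative real spectrum has nonnegative quadratic form. -/
lemma aux_spec_nonneg (T : Y →L[ℝ] Y) (hT : IsSelfAdjoint T)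
    (hs : spectrum ℝ T ⊆ Set.Ici (0 : ℝ)) (x : Y) : 0 ≤ ⟪T x, x⟫ := by
  by_contra hneg
  push_neg at hneg
  have hx0 : x ≠ 0 := by rintro rfl; simp at hneg
  have hnx : 0 < ‖x‖ := norm_pos_iff.mpr hx0
  set sph : Set ℝ := (fun y => ⟪T y, y⟫) '' (Metric.sphere (0 : Y) 1) with hsphdef
  have hxhat : ‖(‖x‖⁻¹ • x)‖ = 1 := by
    rw [norm_smul, norm_inv, norm_norm, inv_mul_cancel₀ hnx.ne']
  have hne : sph.Nonempty := ⟨_, ⟨‖x‖⁻¹ • x, by simpa using hxhat, rfl⟩⟩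
  have hbdd : BddBelow sph := by
    refine ⟨-‖T‖, ?_⟩
    rintro v ⟨y, hy, rfl⟩
    have hy1 : ‖y‖ = 1 := by simpa using hy
    have h1 := abs_real_inner_le_norm (T y) y
    have h2 := T.le_opNorm y
    rw [hy1] at h1 h2
    have := neg_abs_le ⟪T y, y⟫
    simp only
    nlinarith
  set m : ℝ := sInf sph with hmdef
  have hmle : ∀ y : Y, ‖y‖ = 1 → m ≤ ⟪T y, y⟫ := by
    intro y hy
    exact csInf_le hbdd ⟨y, by simpa using hy, rfl⟩
  have hm2 : ∀ y : Y, y ≠ 0 → m * ‖y‖ ^ 2 ≤ ⟪T y, y⟫ := by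
    intro y hy
    have hny : 0 < ‖y‖ := norm_pos_iff.mpr hy
    have h1 : m ≤ ⟪T (‖y‖⁻¹ • y), ‖y‖⁻¹ • y⟫ := by
      apply hmle
      rw [norm_smul, norm_inv, norm_norm, inv_mul_cancel₀ hny.ne']
    have h4 : ‖y‖⁻¹ * ‖y‖ = 1 := inv_mul_cancel₀ hny.ne'
    have h2 : ⟪T (‖y‖⁻¹ • y), ‖y‖⁻¹ • y⟫ * ‖y‖ ^ 2 = ⟪T y, y⟫ := by
      rw [map_smul, real_inner_smul_left, real_inner_smul_right]
      linear_combination (⟪T y, y⟫ * (‖y‖⁻¹ * ‖y‖ + 1)) * h4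
    calc m * ‖y‖ ^ 2 ≤ ⟪T (‖y‖⁻¹ • y), ‖y‖⁻¹ • y⟫ * ‖y‖ ^ 2 :=
          mul_le_mul_of_nonneg_right h1 (sq_nonneg _)
      _ = ⟪T y, y⟫ := h2
  have hmneg : m < 0 := by nlinarith [hm2 x hx0, hneg, hnx]
  set P : Y →L[ℝ] Y := T - m • 1 with hPdef
  have hPsa : IsSelfAdjoint P := by
    apply hT.sub
    rw [IsSelfAdjoint, star_smul, star_trivial, star_one]
  have hPq : ∀ y : Y, ⟪P y, y⟫ = ⟪T y, y⟫ - m * ‖y‖ ^ 2 := by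
    intro y
    simp only [hPdef, ContinuousLinearMap.sub_apply, ContinuousLinearMap.smul_apply,
      ContinuousLinearMap.one_apply, inner_sub_left, real_inner_smul_left,
      real_inner_self_eq_norm_sq]
  have hPpos : ∀ y, 0 ≤ ⟪P y, y⟫ := by
    intro y
    rcases eq_or_ne y 0 with rfl | hy
    · simp
    · rw [hPq]
      linarith [hm2 y hy]
  have h0spec : (0 : ℝ) ∈ spectrum ℝ P := by
    by_contra h0
    rw [spectrum.notMem_iff] at h0
    have hunit : IsUnit P := by
      rw [map_zero, zero_sub] at h0
      have := h0.neg
      rwa [neg_neg] at this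
    obtain ⟨u, hu⟩ := hunit
    set Q : Y →L[ℝ] Y := ↑u⁻¹ with hQdef
    have hQP : ∀ y : Y, Q (P y) = y := by
      intro y
      have h1 : Q * P = 1 := by rw [← hu]; exact u.inv_mul
      calc Q (P y) = (Q * P) y := rfl
        _ = y := by rw [h1]; rfl
    have hbound : ∀ y : Y, ‖y‖ ≤ ‖Q‖ * ‖P y‖ := by
      intro y
      conv_lhs => rw [← hQP y]
      exact Q.le_opNorm _
    have hxh := hbound (‖x‖⁻¹ • x)
    rw [hxhat] at hxh
    have hxh2 := P.le_opNorm (‖x‖⁻¹ • x)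
    rw [hxhat, mul_one] at hxh2
    have hPn : 0 < ‖P‖ := by
      nlinarith [norm_nonneg Q, norm_nonneg (P (‖x‖⁻¹ • x)), norm_nonneg P]
    have hQn : 0 < ‖Q‖ := by
      nlinarith [norm_nonneg Q, norm_nonneg (P (‖x‖⁻¹ • x)), norm_nonneg P]
    have hK : (0 : ℝ) < ‖Q‖ ^ 2 * ‖P‖ := by positivity
    have hlow : ∀ y : Y, ‖y‖ = 1 → m + (‖Q‖ ^ 2 * ‖P‖)⁻¹ ≤ ⟪T y, y⟫ := by
      intro y hy
      have h1 := hbound y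
      rw [hy] at h1
      have h2 := aux_cs P hPsa hPpos y
      have h3 := hPq y
      rw [hy] at h3
      have h4 : 1 ≤ ‖Q‖ ^ 2 * ‖P y‖ ^ 2 := by
        nlinarith [norm_nonneg Q, norm_nonneg (P y)]
      have h5 : ‖Q‖ ^ 2 * ‖P y‖ ^ 2 ≤ ‖Q‖ ^ 2 * (‖P‖ * ⟪P y, y⟫) :=
        mul_le_mul_of_nonneg_left h2 (sq_nonneg _)
      have h7 : 1 ≤ (‖Q‖ ^ 2 * ‖P‖) * (⟪T y, y⟫ - m) := by nlinarith [h4, h5, h3]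
      have h8 : (‖Q‖ ^ 2 * ‖P‖)⁻¹ ≤ ⟪T y, y⟫ - m := by
        rw [inv_eq_one_div, div_le_iff₀ hK]
        nlinarith [h7]
      linarith
    have hcontr : m + (‖Q‖ ^ 2 * ‖P‖)⁻¹ ≤ m := by
      rw [hmdef]
      apply le_csInf hne
      rintro v ⟨y, hy, rfl⟩
      exact hlow y (by simpa using hy)
    have : 0 < (‖Q‖ ^ 2 * ‖P‖)⁻¹ := by positivity
    linarith
  have hmem : m ∈ spectrum ℝ T := by
    rw [spectrum.mem_iff]
    intro hu
    rw [spectrum.mem_iff, map_zero, zero_sub] at h0spec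
    apply h0spec
    have heq : (-P : Y →L[ℝ] Y) = algebraMap ℝ (Y →L[ℝ] Y) m - T := by
      rw [hPdef, Algebra.algebraMap_eq_smul_one]; abel
    rw [heq]; exact hu
  have := hs hmem
  rw [Set.mem_Ici] at this
  linarith

/-- Lower bound for the quadratic form of a selfadjoint operator from its spectrum. -/
lemma aux_quad (T : Y →L[ℝ] Y) (hT : IsSelfAdjoint T) (a : ℝ)
    (hs : spectrum ℝ T ⊆ Set.Ici a) (x : Y) : a * ‖x‖ ^ 2 ≤ ⟪T x, x⟫ := by
  have hsa : IsSelfAdjoint (T - a • 1 : Y →L[ℝ] Y) := by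
    apply hT.sub
    rw [IsSelfAdjoint, star_smul, star_trivial, star_one]
  have hspec' : spectrum ℝ (T - a • 1 : Y →L[ℝ] Y) ⊆ Set.Ici (0 : ℝ) := by
    intro z hz
    rw [spectrum.mem_iff] at hz
    have hz' : z + a ∈ spectrum ℝ T := by
      rw [spectrum.mem_iff]
      intro hu
      apply hz
      have heq : algebraMap ℝ (Y →L[ℝ] Y) z - (T - a • 1) =
          algebraMap ℝ (Y →L[ℝ] Y) (z + a) - T := by
        simp only [map_add, Algebra.algebraMap_eq_smul_one]
        abel
      rw [heq]; exact hu
    have := hs hz'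
    rw [Set.mem_Ici] at this ⊢
    linarith
  have h := aux_spec_nonneg _ hsa hspec' x
  simp only [ContinuousLinearMap.sub_apply, ContinuousLinearMap.smul_apply,
    ContinuousLinearMap.one_apply, inner_sub_left, real_inner_smul_left,
    real_inner_self_eq_norm_sq] at h
  linarith

end Aux

set_option maxHeartbeats 1000000 in
/-- block operator localization of eigenvalues. If Λ is an eigenvalue
of the self-adjoint block operator [[M, B],[Bᵀ, L⊥]] with Λ < (C/2)ε^r, L⊥
self-adjoint with spectrum in [Cε^r, ∞), ‖B‖, ‖Bᵀ‖ ≤ cε, and the eigenvector has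
nonzero component v₁ in the finite-dimensional block, then
dist(σ(M), Λ) ≤ c²ε²/(Cε^r − Λ) ≤ (2c²/C) ε^{2−r}. -/
theorem stmt_5 {Y : Type*} [NormedAddCommGroup Y] [InnerProductSpace ℝ Y]
    [CompleteSpace Y]
    (N : ℕ) (M : Matrix (Fin N) (Fin N) ℝ) (hM : M.IsSymm)
    (Lperp : Y →L[ℝ] Y) (hL : IsSelfAdjoint Lperp)
    (C ε r c : ℝ) (hC : 0 < C) (hε : 0 < ε) (hr : r ∈ Set.Ioo (0:ℝ) 1) (hc : 0 < c)
    (hspec : spectrum ℝ Lperp ⊆ Set.Ici (C * ε ^ r))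
    (B : Y →L[ℝ] EuclideanSpace ℝ (Fin N)) (Bt : EuclideanSpace ℝ (Fin N) →L[ℝ] Y)
    (hB : ‖B‖ ≤ c * ε) (hBt : ‖Bt‖ ≤ c * ε)
    (Λ : ℝ) (hΛ : Λ < (C / 2) * ε ^ r)
    (v₁ : EuclideanSpace ℝ (Fin N)) (ψ : Y) (hv₁ : v₁ ≠ 0)
    (heig1 : Matrix.toEuclideanLin M v₁ + B ψ = Λ • v₁)
    (heig2 : Bt v₁ + Lperp ψ = Λ • ψ) :
    ∃ μ ∈ spectrum ℝ M, |Λ - μ| ≤ c ^ 2 * ε ^ 2 / (C * ε ^ r - Λ) ∧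
      c ^ 2 * ε ^ 2 / (C * ε ^ r - Λ) ≤ (2 * c ^ 2 / C) * ε ^ (2 - r) := by
  have hεr : 0 < ε ^ r := Real.rpow_pos_of_pos hε r
  have ha : Λ < C * ε ^ r := by nlinarith
  have hden : 0 < C * ε ^ r - Λ := by linarith
  set δ : ℝ := c ^ 2 * ε ^ 2 / (C * ε ^ r - Λ) with hδdef
  have hδ0 : 0 ≤ δ := div_nonneg (by positivity) hden.le
  -- the second inequality
  have hchain : δ ≤ (2 * c ^ 2 / C) * ε ^ (2 - r) := by
    have hhalf : (0:ℝ) < (C / 2) * ε ^ r := by positivity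
    have h2a : δ ≤ c ^ 2 * ε ^ 2 / ((C / 2) * ε ^ r) := by
      apply div_le_div_of_nonneg_left (by positivity) hhalf
      linarith
    have h2b : c ^ 2 * ε ^ 2 / ((C / 2) * ε ^ r) = (2 * c ^ 2 / C) * ε ^ (2 - r) := by
      rw [Real.rpow_sub hε, show ε ^ (2:ℝ) = ε ^ (2:ℕ) from by
        rw [← Real.rpow_natCast ε 2]; norm_num]
      field_simp
    linarith [h2a, h2b.le, h2b.ge]
  -- bound on ψ
  have hquad := aux_quad Lperp hL (C * ε ^ r) hspec ψ
  have hinner : ⟪Bt v₁, ψ⟫ = Λ * ‖ψ‖ ^ 2 - ⟪Lperp ψ, ψ⟫ := by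
    have hBtv : Bt v₁ = Λ • ψ - Lperp ψ := eq_sub_of_add_eq heig2
    rw [hBtv, inner_sub_left, real_inner_smul_left, real_inner_self_eq_norm_sq]
  have hBtn : ‖Bt v₁‖ ≤ c * ε * ‖v₁‖ :=
    (Bt.le_opNorm v₁).trans (mul_le_mul_of_nonneg_right hBt (norm_nonneg _))
  have hcs : -(c * ε * ‖v₁‖ * ‖ψ‖) ≤ ⟪Bt v₁, ψ⟫ := by
    have h1 := abs_real_inner_le_norm (Bt v₁) ψ
    have h2 := neg_abs_le ⟪Bt v₁, ψ⟫
    nlinarith [norm_nonneg ψ]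
  have hψb : (C * ε ^ r - Λ) * ‖ψ‖ ≤ c * ε * ‖v₁‖ := by
    rcases eq_or_ne ψ 0 with rfl | hψ0
    · simp only [norm_zero, mul_zero]
      positivity
    · have hψn : 0 < ‖ψ‖ := norm_pos_iff.mpr hψ0
      nlinarith [hquad, hinner, hcs]
  -- bound on (M - Λ) v₁
  set w : EuclideanSpace ℝ (Fin N) := Matrix.toEuclideanLin M v₁ - Λ • v₁ with hwdef
  have hw : w = -(B ψ) := by rw [hwdef, ← heig1]; abel
  have hnormw : ‖w‖ ≤ δ * ‖v₁‖ := by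
    rw [hw, norm_neg]
    have h1 : ‖B ψ‖ ≤ c * ε * ‖ψ‖ :=
      (B.le_opNorm ψ).trans (mul_le_mul_of_nonneg_right hB (norm_nonneg _))
    have h2 : ‖ψ‖ ≤ c * ε * ‖v₁‖ / (C * ε ^ r - Λ) := by
      rw [le_div_iff₀ hden]
      nlinarith [hψb]
    have h3 : c * ε * (c * ε * ‖v₁‖ / (C * ε ^ r - Λ)) = δ * ‖v₁‖ := by
      rw [hδdef]; field_simp
    calc ‖B ψ‖ ≤ c * ε * ‖ψ‖ := h1
      _ ≤ c * ε * (c * ε * ‖v₁‖ / (C * ε ^ r - Λ)) :=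
        mul_le_mul_of_nonneg_left h2 (by positivity)
      _ = δ * ‖v₁‖ := h3
  -- spectral decomposition of M
  have hH : M.IsHermitian := by
    rw [Matrix.IsHermitian, Matrix.conjTranspose_eq_transpose_of_trivial]
    exact hM
  set b := hH.eigenvectorBasis with hbdef
  set ev := hH.eigenvalues with hevdef
  have hsymm : (Matrix.toEuclideanLin M).IsSymmetric :=
    Matrix.isHermitian_iff_isSymmetric.mp hH
  have hbj : ∀ j, Matrix.toEuclideanLin M (b j) = ev j • b j := by
    intro j
    ext i
    exact congrFun (hH.mulVec_eigenvectorBasis j) i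
  have hwj : ∀ j, ⟪b j, w⟫ = (ev j - Λ) * ⟪b j, v₁⟫ := by
    intro j
    rw [hwdef, inner_sub_right, real_inner_smul_right]
    have h1 : ⟪b j, Matrix.toEuclideanLin M v₁⟫ = ev j * ⟪b j, v₁⟫ := by
      rw [← hsymm (b j) v₁, hbj j, real_inner_smul_left]
    rw [h1]; ring
  have hpars : ∀ v : EuclideanSpace ℝ (Fin N), ‖v‖ ^ 2 = ∑ j, ⟪b j, v⟫ ^ 2 := by
    intro v
    have h1 := b.sum_inner_mul_inner v v
    calc ‖v‖ ^ 2 = ⟪v, v⟫ := (real_inner_self_eq_norm_sq v).symm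
      _ = ∑ j, ⟪v, b j⟫ * ⟪b j, v⟫ := h1.symm
      _ = ∑ j, ⟪b j, v⟫ ^ 2 := by
        apply Finset.sum_congr rfl
        intro j _
        rw [real_inner_comm v (b j)]; ring
  obtain ⟨μ, hμmem, hμ⟩ : ∃ μ ∈ spectrum ℝ M, |Λ - μ| ≤ δ := by
    by_contra hcon
    push_neg at hcon
    have hev : ∀ j, δ < |Λ - ev j| := fun j =>
      hcon _ (hH.eigenvalues_mem_spectrum_real j)
    have hex : ∃ j, ⟪b j, v₁⟫ ≠ 0 := by
      by_contra hall
      push_neg at hall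
      apply hv₁
      have hz : ‖v₁‖ ^ 2 = 0 := by
        rw [hpars v₁]
        apply Finset.sum_eq_zero
        intro j _
        rw [hall j]; ring
      exact norm_eq_zero.mp (pow_eq_zero_iff two_ne_zero |>.mp hz)
    obtain ⟨j0, hj0⟩ := hex
    have hsum : ∑ j, δ ^ 2 * ⟪b j, v₁⟫ ^ 2 < ∑ j, ((ev j - Λ) * ⟪b j, v₁⟫) ^ 2 := by
      apply Finset.sum_lt_sum
      · intro j _
        have h2 : δ ^ 2 ≤ (Λ - ev j) ^ 2 := by
          nlinarith [hev j, sq_abs (Λ - ev j), abs_nonneg (Λ - ev j)]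
        nlinarith [mul_le_mul_of_nonneg_right h2 (sq_nonneg ⟪b j, v₁⟫)]
      · refine ⟨j0, Finset.mem_univ j0, ?_⟩
        have h2 : δ ^ 2 < (Λ - ev j0) ^ 2 := by
          nlinarith [hev j0, sq_abs (Λ - ev j0), abs_nonneg (Λ - ev j0)]
        have h3 : 0 < ⟪b j0, v₁⟫ ^ 2 := by positivity
        nlinarith [mul_lt_mul_of_pos_right h2 h3]
    have hL2 : ∑ j, δ ^ 2 * ⟪b j, v₁⟫ ^ 2 = δ ^ 2 * ‖v₁‖ ^ 2 := by
      rw [hpars v₁, Finset.mul_sum]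
    have hR2 : ∑ j, ((ev j - Λ) * ⟪b j, v₁⟫) ^ 2 = ‖w‖ ^ 2 := by
      rw [hpars w]
      apply Finset.sum_congr rfl
      intro j _
      rw [hwj j]
    have hw2 : ‖w‖ ^ 2 ≤ δ ^ 2 * ‖v₁‖ ^ 2 := by
      nlinarith [hnormw, hδ0, norm_nonneg w, norm_nonneg v₁]
    rw [hL2, hR2] at hsum
    linarith
  exact ⟨μ, hμmem, hμ, hchain⟩
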